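/- arXiv:1910.08990 — 2 statements merged into one kernel-verified Lean document; each statement's English description precedes it below -/
import Mathlib

section
/- For every natural number m, the sum over all pairs (d1, d2) of natural numbers with d1 + 2·d2 = m of m!^2 / (d1!^2 · d2!^4) equals the constant coefficient (with respect to the variables x0, x1, x2, x3) of the m-th power of the Laurent polynomial W = (x0^2 + x1^2 + x2·x3)(x0·x1 + x2^2 + x3^2) / (x0·x1·x2·x3). -/
open MvPolynomial in
/-- The Laurent polynomial `W = (x0²+x1²+x2x3)(x0x1+x2²+x3²)/(x0x1x2x3)` has numerator: -/
noncomputable def quadricsNumerator : MvPolynomial (Fin 4) ℤ :=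
  ((X 0) ^ 2 + (X 1) ^ 2 + (X 2) * (X 3)) * ((X 0) * (X 1) + (X 2) ^ 2 + (X 3) ^ 2)

/-!
Expand both factors of the numerator by the multinomial theorem. The term
`(x0²)^k0 (x1²)^k1 (x2x3)^k2 · (x0x1)^l0 (x2²)^l1 (x3²)^l2` is a multiple of `(x0x1x2x3)^m`
exactly when `k = (d2, d2, d1)` and `l = (d1, d2, d2)` with `d1 + 2 d2 = m`, and its coefficient
is then `m!/(d2!² d1!) · m!/(d1! d2!²) = m!²/(d1!² d2!⁴)`.
-/

open Finset MvPolynomial Finsupp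

theorem Nat.cast_multinomial {K α : Type*} [Field K] [CharZero K] (s : Finset α) (f : α → ℕ) :
    (Nat.multinomial s f : K) = (∑ i ∈ s, f i).factorial / ∏ i ∈ s, ((f i).factorial : K) := by
  rw [eq_div_iff (Finset.prod_ne_zero_iff.2 fun _ _ => Nat.cast_ne_zero.2 (Nat.factorial_ne_zero _)),
    mul_comm]
  exact_mod_cast Nat.multinomial_spec s f

namespace MvPolynomial

variable {σ ι κ R : Type*} [CommSemiring R]

theorem sum_monomial_one_pow [DecidableEq ι] (s : Finset ι) (e : ι → σ →₀ ℕ) (n : ℕ) :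
    (∑ i ∈ s, monomial (e i) (1 : R)) ^ n =
      ∑ k ∈ piAntidiag s n, monomial (∑ i ∈ s, k i • e i) (Nat.multinomial s k : R) := by
  rw [sum_pow_eq_sum_piAntidiag]
  refine sum_congr rfl fun k _ => ?_
  simp only [monomial_pow, one_pow, ← monomial_sum_one, ← C_eq_coe_nat, C_mul_monomial, mul_one]

theorem coeff_sum_monomial_mul_sum_monomial [DecidableEq σ] (s : Finset ι) (t : Finset κ)
    (e : ι → σ →₀ ℕ) (f : κ → σ →₀ ℕ) (a : ι → R) (b : κ → R) (c : σ →₀ ℕ) :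
    coeff c ((∑ i ∈ s, monomial (e i) (a i)) * ∑ j ∈ t, monomial (f j) (b j)) =
      ∑ p ∈ (s ×ˢ t).filter (fun p => e p.1 + f p.2 = c), a p.1 * b p.2 := by
  rw [sum_mul_sum, coeff_sum, sum_filter, sum_product]
  simp only [coeff_sum, monomial_mul, coeff_monomial]

end MvPolynomial

noncomputable def quadricsExponentsLeft : Fin 3 → Fin 4 →₀ ℕ :=
  ![single 0 2, single 1 2, single 2 1 + single 3 1]

noncomputable def quadricsExponentsRight : Fin 3 → Fin 4 →₀ ℕ :=
  ![single 0 1 + single 1 1, single 2 2, single 3 2]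

theorem quadricsNumerator_eq :
    quadricsNumerator = (∑ i, monomial (quadricsExponentsLeft i) 1) *
      ∑ i, monomial (quadricsExponentsRight i) 1 := by
  simp [quadricsNumerator, quadricsExponentsLeft, quadricsExponentsRight, Fin.sum_univ_three, X,
    monomial_mul, monomial_pow, smul_single]

theorem mem_quadricsExponentSolutions {m : ℕ} {p : (Fin 3 → ℕ) × (Fin 3 → ℕ)} :
    p ∈ (piAntidiag univ m ×ˢ piAntidiag univ m).filter (fun p =>
        ∑ i, p.1 i • quadricsExponentsLeft i + ∑ i, p.2 i • quadricsExponentsRight i =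
          equivFunOnFinite.symm fun _ => m) ↔
      p.1 0 + p.1 1 + p.1 2 = m ∧ p.2 0 + p.2 1 + p.2 2 = m ∧
        2 * p.1 0 + p.2 0 = m ∧ 2 * p.1 1 + p.2 0 = m ∧
          p.1 2 + 2 * p.2 1 = m ∧ p.1 2 + 2 * p.2 2 = m := by
  simp only [mem_filter, mem_product, mem_piAntidiag, mem_univ, implies_true, and_true,
    Fin.sum_univ_three, Finsupp.ext_iff, Fin.forall_fin_succ, IsEmpty.forall_iff,
    quadricsExponentsLeft, quadricsExponentsRight, Matrix.cons_val, Finsupp.coe_add,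
    Finsupp.coe_smul, Pi.add_apply, Pi.smul_apply, single_apply, smul_eq_mul,
    equivFunOnFinite_symm_apply_apply, Fin.succ_zero_eq_one, Fin.succ_one_eq_two, Fin.reduceSucc,
    Fin.reduceEq, ↓reduceIte, mul_zero, mul_one, add_zero, zero_add]
  omega

theorem sq_factorial_div_eq_multinomial_mul_multinomial {a b m : ℕ} (h : a + 2 * b = m) :
    (m.factorial : ℚ) ^ 2 / ((a.factorial : ℚ) ^ 2 * (b.factorial : ℚ) ^ 4) =
      (Nat.multinomial univ ![b, b, a] : ℚ) * Nat.multinomial univ ![a, b, b] := by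
  simp only [Nat.cast_multinomial, Fin.sum_univ_three, Fin.prod_univ_three, Matrix.cons_val]
  rw [show b + b + a = m by omega, show a + b + b = m by omega]
  field_simp

/-- For every `m`, the sum over `(d1, d2)` with `d1 + 2·d2 = m` of `m!²/(d1!²·d2!⁴)`
equals the constant coefficient of `W^m`, i.e., the coefficient of `(x0x1x2x3)^m` in the
`m`-th power of the numerator of `W`. -/
theorem stmt4 (m : ℕ) :
    (∑ d ∈ (Finset.range (m + 1) ×ˢ Finset.range (m + 1)).filter
        (fun d => d.1 + 2 * d.2 = m),
      ((m.factorial : ℚ)) ^ 2 / ((d.1.factorial : ℚ) ^ 2 * (d.2.factorial : ℚ) ^ 4))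
    = ((MvPolynomial.coeff (Finsupp.equivFunOnFinite.symm fun _ : Fin 4 => m)
        (quadricsNumerator ^ m) : ℤ) : ℚ) := by
  rw [quadricsNumerator_eq, mul_pow, sum_monomial_one_pow, sum_monomial_one_pow,
    coeff_sum_monomial_mul_sum_monomial]
  push_cast
  refine sum_nbij' (fun d => (![d.2, d.2, d.1], ![d.1, d.2, d.2])) (fun p => (p.1 2, p.1 0))
    ?_ ?_ ?_ ?_ ?_
  · intro d hd
    rw [mem_filter, mem_product, mem_range, mem_range] at hd
    rw [mem_quadricsExponentSolutions]
    simp only [Matrix.cons_val]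
    omega
  · intro p hp
    rw [mem_quadricsExponentSolutions] at hp
    rw [mem_filter, mem_product, mem_range, mem_range]
    omega
  · intro d _
    simp only [Matrix.cons_val]
  · rintro ⟨k, l⟩ h
    rw [mem_quadricsExponentSolutions] at h
    dsimp only at h
    rw [Prod.mk.injEq]
    constructor <;> ext i <;> fin_cases i <;> simp only [Fin.reduceFinMk, Matrix.cons_val] <;> omega
  · intro d hd
    exact sq_factorial_div_eq_multinomial_mul_multinomial (mem_filter.1 hd).2
end

section
/- In the formal group with group law z1 • z2 = (z1 + z2)/(1 - z1·z2) over F_p (p an odd prime), the p-fold product of z with itself equals (-1)^((p-1)/2) · z^p, as an identity of formal power series / rational functions; in particular for z ∈ F_p the p-th power of z under • equals (-1)^((p-1)/2) · z. -/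
/-- The formal group law `z1 • z2 = (z1+z2)/(1-z1·z2)` on rational functions over `F_p`. -/
noncomputable def bulletOp (p : ℕ) [Fact p.Prime] (a b : RatFunc (ZMod p)) :
    RatFunc (ZMod p) :=
  (a + b) / (1 - a * b)

/-- The `n`-fold product `z • z • ⋯ • z` of the coordinate `z = X` with itself. -/
noncomputable def bulletFold (p : ℕ) [Fact p.Prime] : ℕ → RatFunc (ZMod p)
  | 0 => 0
  | n + 1 => bulletOp p (bulletFold p n) RatFunc.X

/-!
Writing `z = tan θ`, the law `•` is the addition law of the tangent, so the `n`-fold product of `z`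
is `tan (n θ) = S_n / C_n`, where `C_n + i S_n = (1 + i z)^n` in `F_p[z][i]`. In characteristic `p`
the Frobenius gives `(1 + i z)^p = 1 + i^p z^p = 1 + (-1)^((p-1)/2) i z^p`, so `C_p = 1` and
`S_p = (-1)^((p-1)/2) z^p`.
-/

open Polynomial QuadraticAlgebra

namespace QuadraticAlgebra

variable {R : Type*} [CommRing R]

theorem omega_pow_two_mul_add_one (m : ℕ) :
    (ω : QuadraticAlgebra R (-1) 0) ^ (2 * m + 1) = ((-1) ^ m : R) • ω := by
  rw [pow_succ, pow_mul, sq, omega_mul_omega_eq_mk, ← algebraMap_eq, ← map_pow, ← Algebra.smul_def]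

theorem mk_one_pow_char (p : ℕ) [Fact p.Prime] [CharP R p] (hp : Odd p) (x : R) :
    (⟨1, x⟩ : QuadraticAlgebra R (-1) 0) ^ p = ⟨1, (-1) ^ ((p - 1) / 2) * x ^ p⟩ := by
  have : CharP (QuadraticAlgebra R (-1) 0) p := charP_of_injective_algebraMap algebraMap_injective p
  obtain ⟨m, rfl⟩ := hp
  rw [mk_eq_add_smul_omega, add_pow_char, ← map_pow, _root_.smul_pow, omega_pow_two_mul_add_one,
    smul_smul, Nat.add_sub_cancel, Nat.mul_div_cancel_left _ two_pos, mk_eq_add_smul_omega, one_pow,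
    mul_comm]

theorem coeff_zero_re_mk_one_X_pow (n : ℕ) :
    ((⟨1, X⟩ : QuadraticAlgebra R[X] (-1) 0) ^ n).re.coeff 0 = 1 := by
  induction n with
  | zero => simp
  | succ n ih => simp [pow_succ, ih]

end QuadraticAlgebra

theorem bulletOp_div (p : ℕ) [Fact p.Prime] {s c : RatFunc (ZMod p)} (hc : c ≠ 0)
    (x : RatFunc (ZMod p)) :
    bulletOp p (s / c) x = (s + x * c) / (c - x * s) := by
  rw [bulletOp]
  field_simp

theorem bulletFold_eq_im_div_re (p : ℕ) [Fact p.Prime] (n : ℕ) :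
    bulletFold p n = algebraMap _ _ ((⟨1, X⟩ : QuadraticAlgebra (ZMod p)[X] (-1) 0) ^ n).im /
      algebraMap _ _ ((⟨1, X⟩ : QuadraticAlgebra (ZMod p)[X] (-1) 0) ^ n).re := by
  induction n with
  | zero => simp [bulletFold]
  | succ n ih =>
    have hre : algebraMap _ (RatFunc (ZMod p))
        ((⟨1, X⟩ : QuadraticAlgebra (ZMod p)[X] (-1) 0) ^ n).re ≠ 0 :=
      RatFunc.algebraMap_ne_zero fun h => by
        simpa [h] using coeff_zero_re_mk_one_X_pow (R := ZMod p) n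
    rw [bulletFold, ih, bulletOp_div p hre]
    simp only [pow_succ, re_mul, im_mul, mul_one, one_mul, zero_mul, add_zero, neg_mul, map_add,
      map_mul, map_neg, RatFunc.algebraMap_X]
    ring

/-- In the formal group with law `z1 • z2 = (z1+z2)/(1-z1z2)` over `F_p` (`p` an odd prime),
the `p`-fold product of `z` with itself equals `(-1)^((p-1)/2) · z^p` as rational functions. -/
theorem stmt5 (p : ℕ) [Fact p.Prime] (hodd : Odd p) :
    bulletFold p p = (-1) ^ ((p - 1) / 2) * RatFunc.X ^ p := by
  rw [bulletFold_eq_im_div_re, mk_one_pow_char p hodd]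
  simp
end
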